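/- arXiv:2308.05825 — 2 statements merged into one kernel-verified Lean document; each statement's English description precedes it below -/
import Mathlib

section
/- Let α ∈ k̄^× with |α|_v < 1. Then for every integer N ≥ 1, Ω_α has a simple zero at t = α^{-q^N}, and these are precisely the zeros of Ω_α. -/
/-!
Write `b i = α ^ q ^ (i + 1)`, so that `‖b i‖` decreases strictly to `0`. In an ultrametric field
`‖1 - c‖ = 1` whenever `‖c‖ < 1`, so for fixed `x` all but finitely many factors `1 - b i * x`
have norm `1`, and `‖Ω(x)‖` is the norm of a finite partial product: `Ω(x) = 0` exactly when one
factor vanishes, i.e. `x = (b j)⁻¹`. At such a point `Ω(x) = (1 - b j * x) * G(x)`, where `G` is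
the product with the `j`-th factor removed. `G` is a locally uniform limit of polynomials, hence
continuous, and `G((b j)⁻¹) ≠ 0` because the `‖b i‖` are pairwise distinct; so
`Ω'((b j)⁻¹) = -b j * G((b j)⁻¹) ≠ 0`.
-/

open Filter Finset Topology

lemma hasDerivAt_of_eq_add_sub_smul {𝕜 E : Type*} [NontriviallyNormedField 𝕜]
    [NormedAddCommGroup E] [NormedSpace 𝕜 E] {f g : 𝕜 → E} {x₀ : 𝕜}
    (hf : ∀ x, f x = f x₀ + (x - x₀) • g x) (hg : ContinuousAt g x₀) : HasDerivAt f (g x₀) x₀ := by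
  rw [hasDerivAt_iff_tendsto_slope]
  refine (hg.tendsto.mono_left nhdsWithin_le_nhds).congr' ?_
  filter_upwards [self_mem_nhdsWithin] with x hx
  rw [slope_def_module, hf x, add_sub_cancel_left, inv_smul_smul₀ (sub_ne_zero.2 hx)]

section ProdOneSubMul

variable {K : Type*}

def prodOneSubMul [CommRing K] (b : ℕ → K) (n : ℕ) (x : K) : K :=
  ∏ i ∈ range n, (1 - b i * x)

lemma prodOneSubMul_eq_mul_update [CommRing K] (b : ℕ → K) {j n : ℕ} (hj : j < n) (x : K) :
    prodOneSubMul b n x = (1 - b j * x) * prodOneSubMul (Function.update b j 0) n x := by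
  have hj' : j ∈ range n := mem_range.2 hj
  rw [prodOneSubMul, prodOneSubMul, ← mul_prod_erase _ _ hj', ← mul_prod_erase _ _ hj']
  simp only [Function.update_self, zero_mul, sub_zero, one_mul]
  congr 1
  exact prod_congr rfl fun i hi => by rw [Function.update_of_ne (ne_of_mem_erase hi)]

lemma continuous_prodOneSubMul [NormedField K] (b : ℕ → K) (n : ℕ) :
    Continuous (prodOneSubMul b n) := by
  unfold prodOneSubMul
  fun_prop

lemma norm_prodOneSubMul_le [NormedField K] (b : ℕ → K) (n : ℕ) {x : K} {R : ℝ} (hx : ‖x‖ ≤ R) :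
    ‖prodOneSubMul b n x‖ ≤ ∏ i ∈ range n, (1 + ‖b i‖ * R) := by
  rw [prodOneSubMul, norm_prod]
  refine prod_le_prod (fun _ _ => norm_nonneg _) fun i _ => ?_
  calc ‖1 - b i * x‖ ≤ ‖(1 : K)‖ + ‖b i * x‖ := norm_sub_le _ _
    _ ≤ 1 + ‖b i‖ * R := by
      rw [norm_one, norm_mul]; gcongr

lemma Filter.Tendsto.eventually_norm_mul_lt [NormedField K] {b : ℕ → K} (hb : Tendsto b atTop (𝓝 0))
    (R : ℝ) {δ : ℝ} (hδ : 0 < δ) : ∀ᶠ i in atTop, ‖b i‖ * R < δ := by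
  have : Tendsto (fun i => ‖b i‖ * R) atTop (𝓝 0) := by
    simpa using hb.norm.mul_const R
  exact this.eventually (gt_mem_nhds hδ)

variable [NormedField K] [IsUltrametricDist K]

lemma norm_one_sub_eq_one {c : K} (hc : ‖c‖ < 1) : ‖1 - c‖ = 1 := by
  rw [sub_eq_add_neg, IsUltrametricDist.norm_add_eq_max_of_norm_ne_norm] <;>
    simp [norm_neg, hc.le, hc.ne']

lemma norm_prod_one_sub_sub_one_le {ι : Type*} (s : Finset ι) (c : ι → K) {r : ℝ} (hr₀ : 0 ≤ r)
    (hr₁ : r ≤ 1) (hc : ∀ i ∈ s, ‖c i‖ ≤ r) : ‖∏ i ∈ s, (1 - c i) - 1‖ ≤ r := by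
  induction s using Finset.cons_induction with
  | empty => simpa using hr₀
  | cons a s ha ih =>
    have hca := hc a (mem_cons_self a s)
    have key : ∏ i ∈ cons a s ha, (1 - c i) - 1 = (1 - c a) * (∏ i ∈ s, (1 - c i) - 1) + -c a := by
      rw [prod_cons]; ring
    rw [key]
    refine (IsUltrametricDist.norm_add_le_max _ _).trans (max_le ?_ (by rwa [norm_neg]))
    have h1 : ‖1 - c a‖ ≤ 1 := by
      rw [sub_eq_add_neg]
      exact (IsUltrametricDist.norm_add_le_max _ _).trans
        (max_le norm_one.le (by rw [norm_neg]; exact hca.trans hr₁))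
    rw [norm_mul]
    exact (mul_le_mul h1 (ih fun i hi => hc i (mem_cons_of_mem hi)) (norm_nonneg _)
      zero_le_one).trans_eq (one_mul r)

variable {b : ℕ → K}

lemma norm_prodOneSubMul_eq_of_le {x : K} {M n : ℕ} (hM : ∀ i, M ≤ i → ‖b i * x‖ < 1)
    (hn : M ≤ n) : ‖prodOneSubMul b n x‖ = ‖prodOneSubMul b M x‖ := by
  have htail : ‖∏ i ∈ Ico M n, (1 - b i * x)‖ = 1 := by
    rw [norm_prod]
    exact prod_eq_one fun i hi => norm_one_sub_eq_one (hM i (mem_Ico.1 hi).1)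
  rw [prodOneSubMul, prodOneSubMul, ← prod_range_mul_prod_Ico _ hn, norm_mul, htail, mul_one]

lemma tendsto_prodOneSubMul_eq_zero_iff (hb : Tendsto b atTop (𝓝 0)) {x y : K}
    (hy : Tendsto (fun n => prodOneSubMul b n x) atTop (𝓝 y)) : y = 0 ↔ ∃ i, b i * x = 1 := by
  obtain ⟨M, hM⟩ := (hb.eventually_norm_mul_lt ‖x‖ one_pos).exists_forall_of_atTop
  have hM' : ∀ i, M ≤ i → ‖b i * x‖ < 1 := fun i hi => by rw [norm_mul]; exact hM i hi
  have hnorm : ‖y‖ = ‖prodOneSubMul b M x‖ :=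
    tendsto_nhds_unique hy.norm <| tendsto_const_nhds.congr' <|
      (eventually_ge_atTop M).mono fun n hn => (norm_prodOneSubMul_eq_of_le hM' hn).symm
  rw [← norm_eq_zero, hnorm, norm_eq_zero, prodOneSubMul, prod_eq_zero_iff]
  constructor
  · rintro ⟨i, -, hi⟩
    exact ⟨i, (sub_eq_zero.1 hi).symm⟩
  · rintro ⟨i, hi⟩
    have hiM : i < M := lt_of_not_ge fun h => by simpa [hi] using hM' i h
    exact ⟨i, mem_range.2 hiM, sub_eq_zero.2 hi.symm⟩

lemma norm_prodOneSubMul_sub_le {x : K} {M n : ℕ} (hn : M ≤ n) {r : ℝ} (hr₀ : 0 ≤ r)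
    (hr₁ : r ≤ 1) (hM : ∀ i, M ≤ i → ‖b i * x‖ ≤ r) :
    ‖prodOneSubMul b n x - prodOneSubMul b M x‖ ≤ ‖prodOneSubMul b M x‖ * r := by
  have hsplit : prodOneSubMul b n x - prodOneSubMul b M x =
      prodOneSubMul b M x * (∏ i ∈ Ico M n, (1 - b i * x) - 1) := by
    rw [prodOneSubMul, prodOneSubMul, ← prod_range_mul_prod_Ico _ hn]; ring
  rw [hsplit, norm_mul]
  gcongr
  exact norm_prod_one_sub_sub_one_le _ _ hr₀ hr₁ fun i hi => hM i (mem_Ico.1 hi).1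

lemma uniformCauchySeqOn_prodOneSubMul (hb : Tendsto b atTop (𝓝 0)) {R : ℝ} (hR : 0 ≤ R) :
    UniformCauchySeqOn (prodOneSubMul b) atTop (Metric.closedBall 0 R) := by
  rw [Metric.uniformCauchySeqOn_iff]
  intro ε hε
  obtain ⟨M₀, hM₀⟩ := (hb.eventually_norm_mul_lt R one_pos).exists_forall_of_atTop
  set C := ∏ i ∈ range M₀, (1 + ‖b i‖ * R)
  have hC : 0 < C := prod_pos fun i _ => by positivity
  set δ := min 1 (ε / (2 * C))
  have hδ : 0 < δ := lt_min one_pos (by positivity)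
  obtain ⟨M₁, hM₁⟩ := (hb.eventually_norm_mul_lt R hδ).exists_forall_of_atTop
  have hbx : ∀ x ∈ Metric.closedBall (0 : K) R, ∀ i, ‖b i * x‖ ≤ ‖b i‖ * R := fun x hx i => by
    rw [norm_mul]; exact mul_le_mul_of_nonneg_left (mem_closedBall_zero_iff.1 hx) (norm_nonneg _)
  set N := max M₀ M₁
  have hclose : ∀ n ≥ N, ∀ x ∈ Metric.closedBall (0 : K) R,
      dist (prodOneSubMul b n x) (prodOneSubMul b N x) < ε := by
    intro n hn x hx
    rw [dist_eq_norm]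
    calc ‖prodOneSubMul b n x - prodOneSubMul b N x‖
        ≤ ‖prodOneSubMul b N x‖ * δ :=
          norm_prodOneSubMul_sub_le hn hδ.le (min_le_left _ _) fun i hi =>
            (hbx x hx i).trans (hM₁ i ((le_max_right _ _).trans hi)).le
      _ = ‖prodOneSubMul b M₀ x‖ * δ := by
          rw [norm_prodOneSubMul_eq_of_le (fun i hi => (hbx x hx i).trans_lt (hM₀ i hi))
            (le_max_left M₀ M₁)]
      _ ≤ C * (ε / (2 * C)) := by
          gcongr
          · exact norm_prodOneSubMul_le b M₀ (mem_closedBall_zero_iff.1 hx)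
          · exact min_le_right _ _
      _ < ε := by field_simp; linarith
  exact ⟨N, fun m hm n hn x hx => (dist_triangle_max _ (prodOneSubMul b N x) _).trans_lt
    (max_lt (hclose m hm x hx) (dist_comm (prodOneSubMul b n x) _ ▸ hclose n hn x hx))⟩

variable [CompleteSpace K]

lemma exists_continuous_tendsto_prodOneSubMul (hb : Tendsto b atTop (𝓝 0)) :
    ∃ G : K → K, Continuous G ∧ ∀ x, Tendsto (fun n => prodOneSubMul b n x) atTop (𝓝 (G x)) := by
  choose G hG using fun x : K => cauchySeq_tendsto_of_complete <|
    (uniformCauchySeqOn_prodOneSubMul hb (norm_nonneg x)).cauchySeq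
      (mem_closedBall_zero_iff.2 le_rfl)
  refine ⟨G, continuous_iff_continuousAt.2 fun x => ?_, hG⟩
  have hunif := (uniformCauchySeqOn_prodOneSubMul hb (by positivity : 0 ≤ ‖x‖ + 1)
    ).tendstoUniformlyOn_of_tendsto fun y _ => hG y
  refine (hunif.continuousOn (Frequently.of_forall fun n =>
    (continuous_prodOneSubMul b n).continuousOn)).continuousAt
    (Metric.closedBall_mem_nhds_of_mem (by simp))

end ProdOneSubMul

lemma exists_hasDerivAt_ne_zero_of_tendsto_prodOneSubMul {K : Type*} [NontriviallyNormedField K]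
    [IsUltrametricDist K] [CompleteSpace K] {b : ℕ → K} (hb : Tendsto b atTop (𝓝 0))
    {F : K → K} (hF : ∀ x, Tendsto (fun n => prodOneSubMul b n x) atTop (𝓝 (F x)))
    {j : ℕ} {x₀ : K} (hj : b j * x₀ = 1) (hsimple : ∀ i ≠ j, b i * x₀ ≠ 1) :
    ∃ c ≠ 0, HasDerivAt F c x₀ := by
  set b' := Function.update b j 0
  have hb' : Tendsto b' atTop (𝓝 0) :=
    hb.congr' <| (eventually_ne_atTop j).mono fun i hi => (Function.update_of_ne hi _ _).symm
  obtain ⟨G, hGc, hG⟩ := exists_continuous_tendsto_prodOneSubMul hb'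
  have hFG : ∀ x, F x = (1 - b j * x) * G x := fun x =>
    tendsto_nhds_unique (hF x) <| ((hG x).const_mul _).congr' <|
      (eventually_gt_atTop j).mono fun n hn => (prodOneSubMul_eq_mul_update b hn x).symm
  have hGx₀ : G x₀ ≠ 0 := fun h => by
    obtain ⟨i, hi⟩ := (tendsto_prodOneSubMul_eq_zero_iff hb' (hG x₀)).1 h
    rcases eq_or_ne i j with rfl | hij
    · simp [b'] at hi
    · exact hsimple i hij (by simpa [b', hij] using hi)
  refine ⟨-b j * G x₀, mul_ne_zero (neg_ne_zero.2 (left_ne_zero_of_mul_eq_one hj)) hGx₀, ?_⟩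
  refine hasDerivAt_of_eq_add_sub_smul (g := fun x => -b j * G x) (fun x => ?_)
    (continuous_const.mul hGc).continuousAt
  rw [hFG, hFG x₀, hj, sub_self, zero_mul, zero_add, smul_eq_mul]
  linear_combination -(G x) * hj

lemma strictAnti_norm_pow_pow {K : Type*} [NormedField K] {α : K} (hα0 : α ≠ 0) (hα1 : ‖α‖ < 1)
    {q : ℕ} (hq : 1 < q) : StrictAnti fun n : ℕ => ‖α ^ q ^ n‖ := fun m n hmn => by
  simp only [norm_pow]
  exact pow_lt_pow_right_of_lt_one₀ (norm_pos_iff.2 hα0) hα1 (Nat.pow_lt_pow_right hq hmn)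

theorem omega_zeros
    (K : Type*) [NontriviallyNormedField K] [CompleteSpace K] [IsUltrametricDist K]
    (p m q : ℕ) (hp : p.Prime) (hm : 0 < m) (hq : q = p ^ m)
    (α : K) (hα0 : α ≠ 0) (hα1 : ‖α‖ < 1)
    -- F is the entire function defined by the infinite product Ω_α
    (F : K → K)
    (hF : ∀ x : K, Tendsto (fun N => ∏ i ∈ Finset.range N, (1 - α ^ q ^ (i + 1) * x))
      atTop (nhds (F x))) :
    (∀ N : ℕ, 1 ≤ N →
        F ((α ^ q ^ N)⁻¹) = 0 ∧ deriv F ((α ^ q ^ N)⁻¹) ≠ 0) ∧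
      ∀ x : K, F x = 0 → ∃ N : ℕ, 1 ≤ N ∧ x = (α ^ q ^ N)⁻¹ := by
  set b : ℕ → K := fun i => α ^ q ^ (i + 1)
  have hq1 : 1 < q := hq ▸ Nat.one_lt_pow hm.ne' hp.one_lt
  have hb : Tendsto b atTop (𝓝 0) :=
    (tendsto_pow_atTop_nhds_zero_of_norm_lt_one hα1).comp
      ((tendsto_pow_atTop_atTop_of_one_lt hq1).comp (tendsto_add_atTop_nat 1))
  have hb_inj : Function.Injective b := fun i j h =>
    Nat.succ_injective ((strictAnti_norm_pow_pow hα0 hα1 hq1).injective (congrArg norm h))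
  have hroot : ∀ x, F x = 0 ↔ ∃ i, b i * x = 1 := fun x =>
    tendsto_prodOneSubMul_eq_zero_iff hb (hF x)
  refine ⟨fun N hN => ?_, fun x hx => ?_⟩
  · obtain ⟨j, rfl⟩ := Nat.exists_eq_add_of_le' hN
    have hj : b j * (b j)⁻¹ = 1 := mul_inv_cancel₀ (pow_ne_zero _ hα0)
    refine ⟨(hroot _).2 ⟨j, hj⟩, ?_⟩
    have hsimple : ∀ i ≠ j, b i * (b j)⁻¹ ≠ 1 := fun i hi h =>
      hi (hb_inj (mul_right_cancel₀ (inv_ne_zero (pow_ne_zero _ hα0)) (h.trans hj.symm)))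
    obtain ⟨c, hc, hder⟩ := exists_hasDerivAt_ne_zero_of_tendsto_prodOneSubMul hb hF hj hsimple
    rwa [hder.deriv]
  · obtain ⟨i, hi⟩ := (hroot x).1 hx
    exact ⟨i + 1, by omega, eq_inv_of_mul_eq_one_right hi⟩
end

section
/- (v-adic ABP criterion, ℓ = 1 case) Let Φ(t) ∈ k̄[t], and let ψ(t) be a v-adically entire power series with algebraic coefficients generating a finite extension of k_v, satisfying ψ^{(-1)} = Φψ. Let γ ∈ k̄^× \ F̄_q^× with Φ(γ^{q^{-i}}) ≠ 0 for all i ≥ 1. If ψ(γ) = 0, then ψ vanishes identically. -/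
/-! Raising `ψ^{(-1)}(y) = Φ(y) ψ(y)` to the `q`-th power gives `ψ(y^q) = (Φ(y) ψ(y))^q`, so the
zero at `γ` propagates to every `γ^{q^{-μ}}`. These roots are pairwise distinct, since `γ` is not
in `F̄_q`, and have norm at most `max 1 |γ|`. An entire series over an ultrametric field vanishing
at infinitely many points `z_μ` of a disc `|x| ≤ r` is zero: dividing by `x - z` with `|z| ≤ s`
divides the Gauss norm of radius `s` by exactly `s`, so after `m` divisions
`|ψ|_r ≤ r^m |ψ_m|_r ≤ r^m |ψ_m|_{2r} ≤ 2^{-m} |ψ|_{2r}`. -/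

open Filter Topology PowerSeries Finset

section RootTower

variable {M : Type*} [Monoid M] {q : ℕ} {g : ℕ → M}

theorem pow_pow_eq_of_pow_succ_eq (hg : ∀ i, g (i + 1) ^ q = g i) (μ : ℕ) :
    g μ ^ q ^ μ = g 0 := by
  induction μ with
  | zero => simp
  | succ μ ih => rw [pow_succ', pow_mul, hg, ih]

theorem injective_of_pow_succ_eq (hg : ∀ i, g (i + 1) ^ q = g i)
    (hg0 : ∀ n, 0 < n → g 0 ^ q ^ n ≠ g 0) : Function.Injective g := by
  intro μ ν hμν
  by_contra hne
  wlog hlt : μ < ν generalizing μ ν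
  · exact this hμν.symm (Ne.symm hne) (by omega)
  refine hg0 (ν - μ) (by omega) ?_
  calc g 0 ^ q ^ (ν - μ) = g ν ^ (q ^ μ * q ^ (ν - μ)) := by
        rw [← pow_pow_eq_of_pow_succ_eq hg μ, hμν, ← pow_mul]
    _ = g 0 := by rw [← pow_add, Nat.add_sub_cancel' hlt.le, pow_pow_eq_of_pow_succ_eq hg]

end RootTower

theorem isBounded_range_of_pow_succ_eq {K : Type*} [NormedField K] {q : ℕ} (hq : q ≠ 0)
    {g : ℕ → K} (hg : ∀ i, g (i + 1) ^ q = g i) : Bornology.IsBounded (Set.range g) := by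
  refine isBounded_iff_forall_norm_le.mpr ⟨max 1 ‖g 0‖, Set.forall_mem_range.mpr fun μ => ?_⟩
  by_contra! h
  have h1 : 1 < ‖g μ‖ := (le_max_left _ _).trans_lt h
  have : ‖g μ‖ ≤ ‖g 0‖ := by
    rw [← pow_pow_eq_of_pow_succ_eq hg μ, norm_pow]
    exact le_self_pow₀ h1.le (pow_ne_zero _ hq)
  exact h.not_ge (this.trans (le_max_right _ _))

theorem HasSum.pow_expChar_pow {ι R : Type*} [CommSemiring R] [TopologicalSpace R]
    [IsTopologicalSemiring R] (p : ℕ) [ExpChar R p] (k : ℕ) {f : ι → R} {a : R}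
    (h : HasSum f a) : HasSum (fun i => f i ^ p ^ k) (a ^ p ^ k) := by
  simpa [Function.comp_def, iterateFrobenius_def] using h.map (iterateFrobenius R p k)
    ((continuous_pow (p ^ k)).congr fun x => (iterateFrobenius_def p k x).symm)

namespace PowerSeries

section NormedField

variable {K : Type*} [NormedField K]

def IsEntire (f : K⟦X⟧) : Prop := ∀ s : ℝ, 0 < s → HasGaussNorm norm s f

noncomputable def tsumEval (f : K⟦X⟧) (x : K) : K := ∑' i, coeff i f * x ^ i

noncomputable def divXSubC (f : K⟦X⟧) (z : K) : K⟦X⟧ :=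
  mk fun j => ∑' i, coeff (i + j + 1) f * z ^ i

theorem HasGaussNorm.of_le_radius {f : K⟦X⟧} {s t : ℝ} (hf : HasGaussNorm norm t f) (hs : 0 ≤ s)
    (hst : s ≤ t) : HasGaussNorm norm s f := by
  obtain ⟨B, hB⟩ := hf
  refine ⟨B, Set.forall_mem_range.mpr fun i => le_trans ?_ (hB ⟨i, rfl⟩)⟩
  dsimp only
  gcongr

theorem gaussNorm_mono_radius {f : K⟦X⟧} {s t : ℝ} (hf : HasGaussNorm norm t f) (hs : 0 ≤ s)
    (hst : s ≤ t) : gaussNorm norm s f ≤ gaussNorm norm t f := by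
  rw [gaussNorm_eq]
  refine Real.iSup_le (fun i => le_trans ?_ (le_gaussNorm norm t f hf i))
    (gaussNorm_nonneg _ _ _ norm_nonneg)
  gcongr

theorem isEntire_mk_of_tendsto_norm_rpow {a : ℕ → K}
    (ha : Tendsto (fun i => ‖a i‖ ^ ((1 : ℝ) / i)) atTop (𝓝 0)) : IsEntire (mk a) := by
  intro s hs
  suffices h : Tendsto (fun i => ‖a i‖ * s ^ i) atTop (𝓝 0) by
    simpa [HasGaussNorm] using h.bddAbove_range
  refine squeeze_zero' (.of_forall fun i => by positivity) ?_
    (tendsto_pow_atTop_nhds_zero_of_lt_one (r := 1 / 2) (by norm_num) (by norm_num))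
  filter_upwards [ha.eventually (gt_mem_nhds (by positivity : (0 : ℝ) < 1 / (2 * s))),
    eventually_ne_atTop 0] with i hi hi0
  have : ‖a i‖ ≤ (1 / (2 * s)) ^ i := by
    rw [← Real.rpow_inv_natCast_pow (norm_nonneg (a i)) hi0]
    rw [one_div (i : ℝ)] at hi
    gcongr
  calc ‖a i‖ * s ^ i ≤ (1 / (2 * s)) ^ i * s ^ i := by gcongr
    _ = (1 / 2) ^ i := by rw [← mul_pow]; field_simp

theorem IsEntire.summable_norm_mul_pow {f : K⟦X⟧} (hf : IsEntire f) {t : ℝ} (ht : 0 ≤ t) :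
    Summable fun i => ‖coeff i f‖ * t ^ i := by
  obtain ⟨B, hB⟩ := hf (2 * t + 1) (by positivity)
  have hq : t / (2 * t + 1) < 1 := by rw [div_lt_one (by positivity)]; linarith
  refine .of_nonneg_of_le (fun i => by positivity) (fun i => ?_)
    ((summable_geometric_of_lt_one (by positivity) hq).mul_left B)
  calc ‖coeff i f‖ * t ^ i = ‖coeff i f‖ * (2 * t + 1) ^ i * (t / (2 * t + 1)) ^ i := by
        rw [div_pow, mul_assoc, mul_div_cancel₀ _ (by positivity)]
    _ ≤ B * (t / (2 * t + 1)) ^ i := by gcongr; exact hB ⟨i, rfl⟩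

theorem IsEntire.summable_norm_coeff_mul_pow {f : K⟦X⟧} (hf : IsEntire f) (x : K) :
    Summable fun i => ‖coeff i f * x ^ i‖ := by
  simpa only [norm_mul, norm_pow] using hf.summable_norm_mul_pow (norm_nonneg x)

theorem summable_norm_coeff_coe_mul_pow (Φ : Polynomial K) (x : K) :
    Summable fun i => ‖coeff i (Φ : K⟦X⟧) * x ^ i‖ :=
  summable_of_ne_finset_zero (s := Φ.support) fun i hi => by
    simp [Polynomial.notMem_support_iff.mp hi]

theorem tsumEval_coe (Φ : Polynomial K) (x : K) : tsumEval (Φ : K⟦X⟧) x = Φ.eval x := by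
  rw [tsumEval, tsum_eq_sum (s := Φ.support) fun i hi => by
    simp [Polynomial.notMem_support_iff.mp hi]]
  simp [Polynomial.eval_eq_sum, Polynomial.sum]

theorem hasSum_X_sub_C_mul {h : K⟦X⟧} {x S : K} (z : K)
    (hS : HasSum (fun i => coeff i h * x ^ i) S) :
    HasSum (fun i => coeff i ((X - C z) * h) * x ^ i) ((x - z) * S) := by
  have hX : HasSum (fun i => coeff i (X * h) * x ^ i) (x * S) := by
    refine (hasSum_nat_add_iff' 1).mp ?_
    simpa [coeff_succ_X_mul, pow_succ, mul_left_comm _ x, mul_comm _ x] using hS.mul_left x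
  simpa only [sub_mul, map_sub, coeff_C_mul, mul_assoc] using hX.sub (hS.mul_left z)

theorem tsumEval_pow_eq_pow_of_hasSum {p k : ℕ} [ExpChar K p] {f f' : K⟦X⟧}
    (hcoeff : ∀ n, coeff n f' ^ p ^ k = coeff n f) {y S : K}
    (h : HasSum (fun n => coeff n f' * y ^ n) S) : tsumEval f (y ^ p ^ k) = S ^ p ^ k := by
  refine (tsum_congr fun n => ?_).trans (h.pow_expChar_pow p k).tsum_eq
  rw [mul_pow, hcoeff, ← pow_mul, ← pow_mul, mul_comm n]

variable [CompleteSpace K]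

theorem IsEntire.summable_coeff_add_mul_pow {f : K⟦X⟧} (hf : IsEntire f) (k : ℕ) (x : K) :
    Summable fun i => coeff (i + k) f * x ^ i := by
  refine .of_norm <| .of_nonneg_of_le (fun i => norm_nonneg _) (fun i => ?_)
    ((summable_nat_add_iff k).mpr (hf.summable_norm_mul_pow (t := ‖x‖ + 1) (by positivity)))
  have hx : 1 ≤ ‖x‖ + 1 := by linarith [norm_nonneg x]
  calc ‖coeff (i + k) f * x ^ i‖ ≤ ‖coeff (i + k) f‖ * (‖x‖ + 1) ^ i := by
        rw [norm_mul, norm_pow]; gcongr; linarith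
    _ ≤ ‖coeff (i + k) f‖ * (‖x‖ + 1) ^ (i + k) := by gcongr; omega

theorem hasSum_coeff_mul_mul_pow {f g : K⟦X⟧} {x : K}
    (hf : Summable fun i => ‖coeff i f * x ^ i‖) (hg : Summable fun i => ‖coeff i g * x ^ i‖) :
    HasSum (fun n => coeff n (f * g) * x ^ n) (tsumEval f x * tsumEval g x) := by
  have hterm : ∀ n, coeff n (f * g) * x ^ n =
      ∑ kl ∈ antidiagonal n, coeff kl.1 f * x ^ kl.1 * (coeff kl.2 g * x ^ kl.2) := by
    intro n
    rw [coeff_mul, Finset.sum_mul]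
    refine Finset.sum_congr rfl fun kl hkl => ?_
    rw [← mem_antidiagonal.mp hkl, pow_add]
    ring
  simp only [hterm]
  rw [tsumEval, tsumEval, tsum_mul_tsum_eq_tsum_sum_antidiagonal_of_summable_norm hf hg]
  exact (summable_sum_mul_antidiagonal_of_summable_norm' hf hf.of_norm hg hg.of_norm).hasSum

theorem tsumEval_eq_zero_of_twist {p k : ℕ} [ExpChar K p] {f f' : K⟦X⟧} {Φ : Polynomial K}
    (hf : IsEntire f) (htwist : f' = Φ * f) (hcoeff : ∀ n, coeff n f' ^ p ^ k = coeff n f)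
    {y : K} (hy : tsumEval f (y ^ p ^ k) = 0) (hΦ : Φ.eval y ≠ 0) : tsumEval f y = 0 := by
  have hsum := hasSum_coeff_mul_mul_pow (summable_norm_coeff_coe_mul_pow Φ y)
    (hf.summable_norm_coeff_mul_pow y)
  rw [← htwist, tsumEval_coe] at hsum
  rw [tsumEval_pow_eq_pow_of_hasSum hcoeff hsum,
    pow_eq_zero_iff (pow_pos (expChar_pos K p) k).ne'] at hy
  exact (mul_eq_zero.mp hy).resolve_left hΦ

theorem tsum_coeff_add_mul_pow {f : K⟦X⟧} (hf : IsEntire f) (k : ℕ) (x : K) :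
    ∑' i, coeff (i + k) f * x ^ i = coeff k f + x * ∑' i, coeff (i + k + 1) f * x ^ i := by
  rw [(hf.summable_coeff_add_mul_pow k x).tsum_eq_zero_add, ← tsum_mul_left]
  simp only [zero_add, pow_zero, mul_one, pow_succ]
  congr 1
  refine tsum_congr fun i => ?_
  rw [add_right_comm, add_assoc]
  ring

theorem tsumEval_X_sub_C_mul {h : K⟦X⟧} (hh : IsEntire h) (z x : K) :
    tsumEval ((X - C z) * h) x = (x - z) * tsumEval h x :=
  (hasSum_X_sub_C_mul z (hh.summable_norm_coeff_mul_pow x).of_norm.hasSum).tsum_eq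

theorem X_sub_C_mul_divXSubC {f : K⟦X⟧} (hf : IsEntire f) {z : K} (hz : tsumEval f z = 0) :
    (X - C z) * f.divXSubC z = f := by
  ext n
  rcases n with _ | n
  · have h0 := tsum_coeff_add_mul_pow hf 0 z
    simp only [add_zero] at h0
    rw [← tsumEval, hz] at h0
    simp only [sub_mul, map_sub, coeff_zero_X_mul, coeff_C_mul, divXSubC, coeff_mk]
    linear_combination h0
  · have hn := tsum_coeff_add_mul_pow hf (n + 1) z
    simp only [← add_assoc] at hn
    simp only [sub_mul, map_sub, coeff_succ_X_mul, coeff_C_mul, divXSubC, coeff_mk]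
    linear_combination hn

end NormedField

section Ultrametric

variable {K : Type*} [NormedField K] [IsUltrametricDist K]

theorem mul_norm_coeff_divXSubC_mul_pow_le {f : K⟦X⟧} {s : ℝ} (hf : HasGaussNorm norm s f)
    (hs : 0 < s) {z : K} (hz : ‖z‖ ≤ s) (j : ℕ) :
    s * (‖coeff j (f.divXSubC z)‖ * s ^ j) ≤ gaussNorm norm s f := by
  have hsj : 0 < s ^ (j + 1) := by positivity
  have hterm : ∀ i, ‖coeff (i + j + 1) f * z ^ i‖ ≤ gaussNorm norm s f / s ^ (j + 1) := by
    intro i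
    rw [le_div_iff₀ hsj, norm_mul, norm_pow]
    calc ‖coeff (i + j + 1) f‖ * ‖z‖ ^ i * s ^ (j + 1)
        ≤ ‖coeff (i + j + 1) f‖ * s ^ i * s ^ (j + 1) := by gcongr
      _ = ‖coeff (i + j + 1) f‖ * s ^ (i + j + 1) := by ring
      _ ≤ gaussNorm norm s f := le_gaussNorm norm s f hf _
  have hcoeff := IsUltrametricDist.norm_tsum_le_of_forall_le_of_nonneg
    (div_nonneg (gaussNorm_nonneg _ _ _ norm_nonneg) hsj.le) hterm
  rw [divXSubC, coeff_mk]
  calc s * (‖∑' i, coeff (i + j + 1) f * z ^ i‖ * s ^ j)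
      = ‖∑' i, coeff (i + j + 1) f * z ^ i‖ * s ^ (j + 1) := by ring
    _ ≤ gaussNorm norm s f := (le_div_iff₀ hsj).mp hcoeff

theorem IsEntire.divXSubC {f : K⟦X⟧} (hf : IsEntire f) (z : K) : IsEntire (f.divXSubC z) := by
  intro s hs
  have ht : 0 < max s ‖z‖ := lt_max_of_lt_left hs
  refine HasGaussNorm.of_le_radius (t := max s ‖z‖)
    ⟨gaussNorm norm (max s ‖z‖) f / max s ‖z‖, ?_⟩ hs.le (le_max_left _ _)
  rintro _ ⟨j, rfl⟩
  rw [le_div_iff₀ ht, mul_comm]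
  exact mul_norm_coeff_divXSubC_mul_pow_le (hf _ ht) ht (le_max_right _ _) j

theorem mul_gaussNorm_divXSubC_le {f : K⟦X⟧} {s : ℝ} (hf : HasGaussNorm norm s f) (hs : 0 < s)
    {z : K} (hz : ‖z‖ ≤ s) : s * gaussNorm norm s (f.divXSubC z) ≤ gaussNorm norm s f := by
  rw [gaussNorm_eq, Real.mul_iSup_of_nonneg hs.le]
  exact Real.iSup_le (mul_norm_coeff_divXSubC_mul_pow_le hf hs hz)
    (gaussNorm_nonneg _ _ _ norm_nonneg)

theorem gaussNorm_X_sub_C_mul_le {h : K⟦X⟧} {s : ℝ} (hh : HasGaussNorm norm s h) (hs : 0 ≤ s)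
    {z : K} (hz : ‖z‖ ≤ s) : gaussNorm norm s ((X - C z) * h) ≤ s * gaussNorm norm s h := by
  have hG : ∀ n, ‖coeff n h‖ * s ^ n ≤ gaussNorm norm s h := le_gaussNorm norm s h hh
  have hX : ∀ n, ‖coeff n (X * h)‖ * s ^ n ≤ s * gaussNorm norm s h := by
    rintro (_ | n)
    · simpa using mul_nonneg hs (gaussNorm_nonneg _ _ _ norm_nonneg)
    · rw [coeff_succ_X_mul, pow_succ, ← mul_assoc, mul_comm _ s]
      exact mul_le_mul_of_nonneg_left (hG n) hs
  have hCz : ∀ n, ‖z * coeff n h‖ * s ^ n ≤ s * gaussNorm norm s h := fun n => by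
    rw [norm_mul, mul_assoc]
    exact mul_le_mul hz (hG n) (by positivity) hs
  rw [gaussNorm_eq]
  refine Real.iSup_le (fun n => ?_) (mul_nonneg hs (gaussNorm_nonneg _ _ _ norm_nonneg))
  rw [sub_mul, map_sub, coeff_C_mul, sub_eq_add_neg]
  calc ‖coeff n (X * h) + -(z * coeff n h)‖ * s ^ n
      ≤ max ‖coeff n (X * h)‖ ‖-(z * coeff n h)‖ * s ^ n := by
        gcongr; exact IsUltrametricDist.norm_add_le_max _ _
    _ = max (‖coeff n (X * h)‖ * s ^ n) (‖z * coeff n h‖ * s ^ n) := by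
        rw [norm_neg, max_mul_of_nonneg _ _ (by positivity)]
    _ ≤ s * gaussNorm norm s h := max_le (hX n) (hCz n)

noncomputable def iterDivXSubC (f : K⟦X⟧) (g : ℕ → K) : ℕ → K⟦X⟧
  | 0 => f
  | m + 1 => (iterDivXSubC f g m).divXSubC (g m)

variable {f : K⟦X⟧} {g : ℕ → K}

theorem isEntire_iterDivXSubC (hf : IsEntire f) (m : ℕ) : IsEntire (iterDivXSubC f g m) := by
  induction m with
  | zero => exact hf
  | succ m ih => exact ih.divXSubC (g m)

theorem pow_mul_gaussNorm_iterDivXSubC_le (hf : IsEntire f) {R : ℝ} (hR : 0 < R)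
    (hgR : ∀ μ, ‖g μ‖ ≤ R) (m : ℕ) :
    R ^ m * gaussNorm norm R (iterDivXSubC f g m) ≤ gaussNorm norm R f := by
  induction m with
  | zero => simp [iterDivXSubC]
  | succ m ih =>
    calc R ^ (m + 1) * gaussNorm norm R (iterDivXSubC f g (m + 1))
        = R ^ m * (R * gaussNorm norm R (iterDivXSubC f g (m + 1))) := by ring
      _ ≤ R ^ m * gaussNorm norm R (iterDivXSubC f g m) := by
        gcongr
        exact mul_gaussNorm_divXSubC_le (isEntire_iterDivXSubC hf m R hR) hR (hgR m)
      _ ≤ gaussNorm norm R f := ih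

end Ultrametric

section Descent

variable {K : Type*} [NormedField K] [IsUltrametricDist K] [CompleteSpace K]

variable {f : K⟦X⟧} {g : ℕ → K}

theorem tsumEval_iterDivXSubC_eq_zero (hf : IsEntire f) (hg : Function.Injective g)
    (hzero : ∀ μ, tsumEval f (g μ) = 0) {m μ : ℕ} (hmμ : m ≤ μ) :
    tsumEval (iterDivXSubC f g m) (g μ) = 0 := by
  induction m generalizing μ with
  | zero => exact hzero μ
  | succ m ih =>
    have h := ih (by omega : m ≤ μ)
    rw [← X_sub_C_mul_divXSubC (isEntire_iterDivXSubC hf m) (ih le_rfl),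
      tsumEval_X_sub_C_mul ((isEntire_iterDivXSubC hf m).divXSubC (g m))] at h
    exact (mul_eq_zero.mp h).resolve_left (sub_ne_zero.mpr (hg.ne (by omega)))

theorem gaussNorm_le_pow_mul_gaussNorm_iterDivXSubC (hf : IsEntire f)
    (hg : Function.Injective g) (hzero : ∀ μ, tsumEval f (g μ) = 0) {r : ℝ} (hr : 0 < r)
    (hgr : ∀ μ, ‖g μ‖ ≤ r) (m : ℕ) :
    gaussNorm norm r f ≤ r ^ m * gaussNorm norm r (iterDivXSubC f g m) := by
  induction m with
  | zero => simp [iterDivXSubC]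
  | succ m ih =>
    have hfac := X_sub_C_mul_divXSubC (isEntire_iterDivXSubC hf m)
      (tsumEval_iterDivXSubC_eq_zero hf hg hzero le_rfl)
    calc gaussNorm norm r f ≤ r ^ m * gaussNorm norm r (iterDivXSubC f g m) := ih
      _ ≤ r ^ m * (r * gaussNorm norm r (iterDivXSubC f g (m + 1))) := by
        rw [← hfac]
        gcongr
        exact gaussNorm_X_sub_C_mul_le (isEntire_iterDivXSubC hf (m + 1) r hr) hr.le (hgr m)
      _ = r ^ (m + 1) * gaussNorm norm r (iterDivXSubC f g (m + 1)) := by ring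

theorem IsEntire.eq_zero_of_forall_tsumEval_eq_zero (hf : IsEntire f) (hg : Function.Injective g)
    (hbdd : Bornology.IsBounded (Set.range g)) (hzero : ∀ μ, tsumEval f (g μ) = 0) : f = 0 := by
  obtain ⟨C, hC⟩ := isBounded_iff_forall_norm_le.mp hbdd
  set r := max C 1
  have hr : 0 < r := lt_max_of_lt_right one_pos
  have hgr : ∀ μ, ‖g μ‖ ≤ r := fun μ => (hC _ ⟨μ, rfl⟩).trans (le_max_left _ _)
  have hgR : ∀ μ, ‖g μ‖ ≤ 2 * r := fun μ => (hgr μ).trans (by linarith)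
  have hbound : ∀ m : ℕ, gaussNorm norm r f ≤ (1 / 2) ^ m * gaussNorm norm (2 * r) f := by
    intro m
    calc gaussNorm norm r f ≤ r ^ m * gaussNorm norm r (iterDivXSubC f g m) :=
          gaussNorm_le_pow_mul_gaussNorm_iterDivXSubC hf hg hzero hr hgr m
      _ ≤ r ^ m * gaussNorm norm (2 * r) (iterDivXSubC f g m) := by
          gcongr
          exact gaussNorm_mono_radius (isEntire_iterDivXSubC hf m _ (by positivity)) hr.le
            (by linarith)
      _ = (1 / 2) ^ m * ((2 * r) ^ m * gaussNorm norm (2 * r) (iterDivXSubC f g m)) := by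
          rw [← mul_assoc, ← mul_pow]; ring
      _ ≤ (1 / 2) ^ m * gaussNorm norm (2 * r) f := by
          gcongr
          exact pow_mul_gaussNorm_iterDivXSubC_le hf (by positivity) hgR m
  have hlim : Tendsto (fun m : ℕ => (1 / 2 : ℝ) ^ m * gaussNorm norm (2 * r) f) atTop (𝓝 0) := by
    simpa using (tendsto_pow_atTop_nhds_zero_of_lt_one (r := (1 / 2 : ℝ)) (by norm_num)
      (by norm_num)).mul_const (gaussNorm norm (2 * r) f)
  have hzero_norm : gaussNorm norm r f = 0 :=
    le_antisymm (ge_of_tendsto' hlim hbound) (gaussNorm_nonneg _ _ _ norm_nonneg)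
  exact (gaussNorm_eq_zero_iff norm r f norm_zero norm_nonneg (fun _ => norm_eq_zero.mp) hr
    (hf r hr)).mp hzero_norm

end Descent

end PowerSeries

theorem vAdic_ABP_rank_one_general
    (Fq : Type*) [Field Fq] [Fintype Fq]
    (K : Type*) [NontriviallyNormedField K] [CompleteSpace K] [IsUltrametricDist K]
    [CharP K (ringChar Fq)]
    -- Φ ∈ k̄[t]
    (Φ : Polynomial K)
    -- ψ ∈ E_v: entire, with algebraic coefficients generating a finite extension of k_v
    (a : ℕ → K)
    (hent : Tendsto (fun i => ‖a i‖ ^ ((1 : ℝ) / (i : ℝ))) atTop (nhds 0))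
    -- ψ^{(-1)} = Φ ψ, coefficientwise: a_n^{1/q} = ∑_{i+j=n} Φ_i a_j
    (a' : ℕ → K) (ha' : ∀ n, a' n ^ (Fintype.card Fq) = a n)
    (hfe : ∀ n : ℕ, a' n = ∑ i ∈ Finset.range (n + 1), Φ.coeff i * a (n - i))
    -- γ ∈ k̄^× \ F̄_q^×, with its q-power root tower g μ = γ^{q^{-μ}}
    (γ : K)
    (hγq : ∀ n : ℕ, 0 < n → γ ^ (Fintype.card Fq) ^ n ≠ γ)
    (g : ℕ → K) (hg0 : g 0 = γ) (hg : ∀ i : ℕ, g (i + 1) ^ (Fintype.card Fq) = g i)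
    (hΦγ : ∀ i : ℕ, 1 ≤ i → Φ.eval (g i) ≠ 0)
    (hψγ : ∑' i, a i * γ ^ i = 0) :
    ∀ x : K, ∑' i, a i * x ^ i = 0 := by
  subst hg0
  obtain ⟨n, hp, hq⟩ := FiniteField.card Fq (ringChar Fq)
  have := Fact.mk hp
  have hf : IsEntire (mk a) := isEntire_mk_of_tendsto_norm_rpow hent
  have htwist : mk a' = (Φ : K⟦X⟧) * mk a := by
    ext m
    simp [hfe, coeff_mul, Finset.Nat.sum_antidiagonal_eq_sum_range_succ_mk]
  have hzero : ∀ μ, tsumEval (mk a) (g μ) = 0 := by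
    intro μ
    induction μ with
    | zero => simpa [tsumEval] using hψγ
    | succ μ ih =>
      refine tsumEval_eq_zero_of_twist (p := ringChar Fq) (k := n) hf htwist (fun m => ?_) ?_
        (hΦγ _ (by omega))
      · rw [coeff_mk, coeff_mk, ← hq, ha']
      · rwa [← hq, hg]
  have hmk := hf.eq_zero_of_forall_tsumEval_eq_zero (injective_of_pow_succ_eq hg hγq)
    (isBounded_range_of_pow_succ_eq Fintype.card_ne_zero hg) hzero
  have ha : a = 0 := funext fun i => by simpa using congrArg (coeff i) hmk
  simp [ha]

theorem vAdic_ABP_rank_one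
    (Fq : Type*) [Field Fq] [Fintype Fq]
    (K : Type*) [NontriviallyNormedField K] [CompleteSpace K] [IsUltrametricDist K]
    [CharP K (ringChar Fq)]
    [Algebra (RatFunc Fq) K]
    -- k_v inside C_v = K
    (kv : Subfield K)
    -- Φ ∈ k̄[t]
    (Φ : Polynomial K) (hΦalg : ∀ i, IsAlgebraic (RatFunc Fq) (Φ.coeff i))
    -- ψ ∈ E_v: entire, with algebraic coefficients generating a finite extension of k_v
    (a : ℕ → K)
    (hent : Tendsto (fun i => ‖a i‖ ^ ((1 : ℝ) / (i : ℝ))) atTop (nhds 0))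
    (haalg : ∀ i, IsAlgebraic (RatFunc Fq) (a i))
    (hfin : FiniteDimensional kv (IntermediateField.adjoin kv (Set.range a)))
    -- ψ^{(-1)} = Φ ψ, coefficientwise: a_n^{1/q} = ∑_{i+j=n} Φ_i a_j
    (a' : ℕ → K) (ha' : ∀ n, a' n ^ (Fintype.card Fq) = a n)
    (hfe : ∀ n : ℕ, a' n = ∑ i ∈ Finset.range (n + 1), Φ.coeff i * a (n - i))
    -- γ ∈ k̄^× \ F̄_q^×, with its q-power root tower g μ = γ^{q^{-μ}}
    (γ : K) (hγ0 : γ ≠ 0) (hγalg : IsAlgebraic (RatFunc Fq) γ)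
    (hγq : ∀ n : ℕ, 0 < n → γ ^ (Fintype.card Fq) ^ n ≠ γ)
    (g : ℕ → K) (hg0 : g 0 = γ) (hg : ∀ i : ℕ, g (i + 1) ^ (Fintype.card Fq) = g i)
    (hΦγ : ∀ i : ℕ, 1 ≤ i → Φ.eval (g i) ≠ 0)
    (hψγ : ∑' i, a i * γ ^ i = 0) :
    ∀ x : K, ∑' i, a i * x ^ i = 0 :=
  vAdic_ABP_rank_one_general Fq K Φ a hent a' ha' hfe γ hγq g hg0 hg hΦγ hψγ
end
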